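/- Let Γ = [0,1]^d and let U, V be disjoint nonempty connected subsets of Γ. Define V' as the connected component of Γ \ U containing V and U' := Γ \ V'. Then closure(U') ∩ closure(V') is a connected subset of Γ. -/

import Mathlib

/-!
The cube is convex, hence contractible and locally path-connected, so every continuous map from it
to the circle lifts through `Circle.exp`. This makes it unicoherent: if closed connected `A`, `B`
cover it and `A ∩ B` splits into disjoint closed parts `P`, `Q`, take an Urysohn function `w`
(`0` on `P`, `1` on `Q`) and the circle-valued map `exp (iπw)` on `A`, `exp (-iπw)` on `B`.
A lift differs from `πw` by a constant on `A` and from `-πw` by a constant on `B`; comparing a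
point of `P` with a point of `Q` gives `π = -π`.

The exterior boundary is `closure V'ᶜ ∩ closure V'`, and both closures are connected: `V'` is a
component of `Uᶜ`, and every other component of `Uᶜ` touches `U` (otherwise it would be clopen),
so `V'ᶜ` is `U` with these components attached.
-/

open Set Topology

section Unicoherence

variable {X : Type*} [TopologicalSpace X]

theorem IsPreconnected.sub_eq_sub_of_circleExp_eq {S : Set X} (hS : IsPreconnected S)
    {F G : X → ℝ} (hF : ContinuousOn F S) (hG : ContinuousOn G S)
    (hFG : ∀ z ∈ S, Circle.exp (F z) = Circle.exp (G z)) {y z : X} (hy : y ∈ S) (hz : z ∈ S) :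
    F y - G y = F z - G z := by
  refine hS.constant_of_mapsTo (T := (AddSubgroup.zmultiples (2 * Real.pi) : Set ℝ))
    (SetLike.isDiscrete_iff_discreteTopology.mpr inferInstance) (hF.sub hG) (fun w hw => ?_) hy hz
  obtain ⟨m, hm⟩ := Circle.exp_eq_exp.mp (hFG w hw)
  exact ⟨m, by simp [hm]⟩

theorem Continuous.exists_lift_circleExp [SimplyConnectedSpace X] [LocallyPathConnectedSpace X]
    {f : X → Circle} (hf : Continuous f) : ∃ F : C(X, ℝ), ∀ z, Circle.exp (F z) = f z := by
  obtain ⟨a⟩ : Nonempty X := inferInstance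
  obtain ⟨e, he⟩ := Circle.exp_surjective (f a)
  obtain ⟨F, -, hF⟩ :=
    (Circle.isCoveringMap_exp.existsUnique_continuousMap_lifts ⟨f, hf⟩ a e he).exists
  exact ⟨F, congrFun hF⟩

theorem frontier_subset_inter_of_union_eq_univ {A B : Set X} (hA : IsClosed A) (hB : IsClosed B)
    (hAB : A ∪ B = univ) : frontier A ⊆ A ∩ B := by
  refine subset_inter hA.frontier_subset ?_
  rw [frontier_eq_closure_inter_closure]
  refine inter_subset_right.trans (closure_minimal (fun z hz => ?_) hB)
  exact (hAB ▸ mem_univ z : z ∈ A ∪ B).resolve_left hz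

theorem IsPreconnected.inter_of_union_eq_univ [NormalSpace X] [SimplyConnectedSpace X]
    [LocallyPathConnectedSpace X] {A B : Set X} (hA : IsClosed A) (hB : IsClosed B)
    (hAc : IsPreconnected A) (hBc : IsPreconnected B) (hAB : A ∪ B = univ) :
    IsPreconnected (A ∩ B) := by
  rw [isPreconnected_iff_subset_of_fully_disjoint_closed (hA.inter hB)]
  intro u v hu hv huv hdisj
  by_contra! h
  obtain ⟨p, hpAB, hpv⟩ := not_subset.1 h.2
  obtain ⟨q, hqAB, hqu⟩ := not_subset.1 h.1
  obtain ⟨w, hw0, hw1, -⟩ := exists_continuous_zero_one_of_isClosed hu hv hdisj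
  have hp : w p = 0 := hw0 ((huv hpAB).resolve_right hpv)
  have hq : w q = 1 := hw1 ((huv hqAB).resolve_left hqu)
  -- winding by `π w` over `A` and by `-π w` over `B` glues along `A ∩ B`, where `w ∈ {0, 1}`
  have hglue : ∀ z ∈ A ∩ B, Circle.exp (Real.pi * w z) = Circle.exp (-(Real.pi * w z)) := by
    intro z hz
    rcases huv hz with hzu | hzv
    · simp [hw0 hzu]
    · exact Circle.exp_eq_exp.mpr ⟨1, by simp [hw1 hzv]; ring⟩
  classical
  have hcont : Continuous (A.piecewise (fun z => Circle.exp (Real.pi * w z))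
      (fun z => Circle.exp (-(Real.pi * w z)))) :=
    Continuous.piecewise (fun z hz => hglue z (frontier_subset_inter_of_union_eq_univ hA hB hAB hz))
      (by fun_prop) (by fun_prop)
  obtain ⟨F, hF⟩ := hcont.exists_lift_circleExp
  have hFA : ∀ z ∈ A, Circle.exp (F z) = Circle.exp (Real.pi * w z) := fun z hz =>
    (hF z).trans (piecewise_eq_of_mem _ _ _ hz)
  have hFB : ∀ z ∈ B, Circle.exp (F z) = Circle.exp (-(Real.pi * w z)) := by
    intro z hz
    refine (hF z).trans ?_
    by_cases hzA : z ∈ A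
    · exact (piecewise_eq_of_mem _ _ _ hzA).trans (hglue z ⟨hzA, hz⟩)
    · exact piecewise_eq_of_notMem _ _ _ hzA
  have hA' := hAc.sub_eq_sub_of_circleExp_eq F.continuous.continuousOn (by fun_prop) hFA
    hpAB.1 hqAB.1
  have hB' := hBc.sub_eq_sub_of_circleExp_eq F.continuous.continuousOn (by fun_prop) hFB
    hpAB.2 hqAB.2
  rw [hp, hq] at hA' hB'
  linarith [Real.pi_pos]

end Unicoherence

section ComplementOfComponent

variable {X : Type*} [TopologicalSpace X]

theorem IsPreconnected.union_of_closure_inter_nonempty {s t : Set X} (hs : IsPreconnected s)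
    (ht : IsPreconnected t) (h : (closure s ∩ t).Nonempty) : IsPreconnected (s ∪ t) := by
  obtain ⟨z, hzs, hzt⟩ := h
  have := (hs.subset_closure (subset_insert z s) (insert_subset hzs subset_closure)).union z
    (mem_insert z s) hzt ht
  rwa [insert_union, insert_eq_of_mem (mem_union_right s hzt)] at this

variable [PreconnectedSpace X] [LocallyConnectedSpace X] {U : Set X}

theorem IsConnected.isPreconnected_union_connectedComponentIn_compl (hU : IsConnected U) (y : X) :
    IsPreconnected (U ∪ connectedComponentIn Uᶜ y) := by
  by_cases hyU : y ∈ U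
  · rw [connectedComponentIn_eq_empty (notMem_compl_iff.2 hyU), union_empty]
    exact hU.isPreconnected
  set D := connectedComponentIn Uᶜ y
  have hD : IsPreconnected D := isPreconnected_connectedComponentIn
  have hyD : y ∈ D := mem_connectedComponentIn hyU
  suffices (closure U ∩ D).Nonempty ∨ (closure D ∩ U).Nonempty by
    rcases this with h | h
    · exact hU.isPreconnected.union_of_closure_inter_nonempty hD h
    · exact union_comm D U ▸ hD.union_of_closure_inter_nonempty hU.isPreconnected h
  -- otherwise `D` would be a proper nonempty clopen set
  by_contra! h
  have hclosed : IsClosed D := by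
    refine closure_subset_iff_isClosed.1 (hD.closure.subset_connectedComponentIn
      (subset_closure hyD) fun z hz hzU => ?_)
    exact (h.2.subset ⟨hz, hzU⟩ :)
  have hopen : IsOpen D := by
    refine isOpen_iff_mem_nhds.2 fun z hz => ?_
    rw [show D = connectedComponentIn Uᶜ z from connectedComponentIn_eq hz]
    refine connectedComponentIn_mem_nhds
      (Filter.mem_of_superset ?_ (compl_subset_compl.2 subset_closure))
    exact isClosed_closure.isOpen_compl.mem_nhds fun hzU => (h.1.subset ⟨hzU, hz⟩ :)
  obtain ⟨u, hu⟩ := hU.nonempty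
  rcases isClopen_iff.1 ⟨hclosed, hopen⟩ with hempty | huniv
  · exact (hempty ▸ hyD :)
  · exact (connectedComponentIn_subset _ _ (huniv ▸ mem_univ u) : u ∈ Uᶜ) hu

theorem IsConnected.isPreconnected_compl_connectedComponentIn (hU : IsConnected U) (x : X) :
    IsPreconnected (connectedComponentIn Uᶜ x)ᶜ := by
  obtain ⟨u, hu⟩ := hU.nonempty
  refine isPreconnected_of_forall u fun z hz =>
    ⟨U ∪ connectedComponentIn Uᶜ z, union_subset ?_ ?_, Or.inl hu, ?_,
      hU.isPreconnected_union_connectedComponentIn_compl z⟩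
  · exact fun w hw hwC => connectedComponentIn_subset _ _ hwC hw
  · intro w hw hwC
    rw [connectedComponentIn_eq hwC, ← connectedComponentIn_eq hw] at hz
    exact hz (mem_connectedComponentIn (connectedComponentIn_nonempty_iff.1 ⟨w, hw⟩))
  · by_cases hzU : z ∈ U
    exacts [Or.inl hzU, Or.inr (mem_connectedComponentIn hzU)]

end ComplementOfComponent

theorem isConnected_closure_compl_inter_closure_connectedComponentIn {X : Type*}
    [TopologicalSpace X] [NormalSpace X] [SimplyConnectedSpace X] [LocallyPathConnectedSpace X]
    {U : Set X} (hU : IsConnected U) {x : X} (hx : x ∉ U) :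
    IsConnected (closure (connectedComponentIn Uᶜ x)ᶜ ∩ closure (connectedComponentIn Uᶜ x)) := by
  set C := connectedComponentIn Uᶜ x
  have hcover : closure Cᶜ ∪ closure C = univ :=
    univ_subset_iff.1 (compl_union_self C ▸ union_subset_union subset_closure subset_closure)
  have hCc : IsPreconnected Cᶜ := hU.isPreconnected_compl_connectedComponentIn x
  obtain ⟨u, hu⟩ := hU.nonempty
  have huC : u ∈ closure Cᶜ := subset_closure fun huC => connectedComponentIn_subset _ _ huC hu
  have hxC : x ∈ closure C := subset_closure (mem_connectedComponentIn hx)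
  refine ⟨?_, hCc.closure.inter_of_union_eq_univ isClosed_closure isClosed_closure
    isPreconnected_connectedComponentIn.closure hcover⟩
  simpa using isPreconnected_closed_iff.1 isPreconnected_univ _ _ isClosed_closure
    isClosed_closure hcover.ge ⟨u, trivial, huC⟩ ⟨x, trivial, hxC⟩

section Subtype

variable {X : Type*} [TopologicalSpace X] {S : Set X}

theorem IsPreconnected.preimage_coe {s : Set X} (hs : IsPreconnected s) (hsS : s ⊆ S) :
    IsPreconnected (Subtype.val ⁻¹' s : Set S) := by
  rwa [← IsInducing.subtypeVal.isPreconnected_image, Subtype.image_preimage_coe,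
    inter_eq_right.2 hsS]

theorem IsConnected.preimage_coe {s : Set X} (hs : IsConnected s) (hsS : s ⊆ S) :
    IsConnected (Subtype.val ⁻¹' s : Set S) :=
  let ⟨x, hx⟩ := hs.nonempty
  ⟨⟨⟨x, hsS hx⟩, hx⟩, hs.isPreconnected.preimage_coe hsS⟩

theorem Subtype.image_val_connectedComponentIn_preimage {T : Set X} (x : S) :
    Subtype.val '' connectedComponentIn (Subtype.val ⁻¹' T : Set S) x =
      connectedComponentIn (S ∩ T) x := by
  by_cases hxT : (x : X) ∈ T
  · refine (Subtype.image_preimage_coe S T ▸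
      continuous_subtype_val.continuousOn.image_connectedComponentIn_subset hxT).antisymm ?_
    set K := connectedComponentIn (S ∩ T) x
    have hKS : K ⊆ S := (connectedComponentIn_subset _ _).trans inter_subset_left
    have hK : Subtype.val '' (Subtype.val ⁻¹' K : Set S) = K := by
      rw [Subtype.image_preimage_coe, inter_eq_right.2 hKS]
    refine hK ▸ image_mono ((isPreconnected_connectedComponentIn.preimage_coe hKS)
      |>.subset_connectedComponentIn ?_ fun z hz => ?_)
    · exact mem_connectedComponentIn ⟨x.2, hxT⟩
    · exact (connectedComponentIn_subset _ _ hz).2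
  · rw [connectedComponentIn_eq_empty (show x ∉ Subtype.val ⁻¹' T from hxT),
      connectedComponentIn_eq_empty fun h => hxT h.2, image_empty]

end Subtype

theorem exterior_boundary_connected_general (d : ℕ) (U V : Set (Fin d → ℝ))
    (hUΓ : U ⊆ Set.Icc (0 : Fin d → ℝ) 1) (hVΓ : V ⊆ Set.Icc (0 : Fin d → ℝ) 1)
    (hdisj : Disjoint U V) (hUc : IsConnected U)
    (x : Fin d → ℝ) (hx : x ∈ V) :
    IsConnected
      (closure (Set.Icc (0 : Fin d → ℝ) 1 \
          connectedComponentIn (Set.Icc (0 : Fin d → ℝ) 1 \ U) x) ∩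
        closure (connectedComponentIn (Set.Icc (0 : Fin d → ℝ) 1 \ U) x)) := by
  set Γ := Icc (0 : Fin d → ℝ) 1
  have : ContractibleSpace Γ := (convex_Icc 0 1).contractibleSpace (nonempty_Icc.2 zero_le_one)
  have : LocallyPathConnectedSpace Γ := (convex_Icc 0 1).locallyPathConnectedSpace
  have hcl : IsClosedEmbedding (Subtype.val : Γ → _) := isClosed_Icc.isClosedEmbedding_subtypeVal
  convert (isConnected_closure_compl_inter_closure_connectedComponentIn (hUc.preimage_coe hUΓ)
    (x := ⟨x, hVΓ hx⟩) (disjoint_left.1 hdisj · hx)).image _ continuous_subtype_val.continuousOn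
    using 1
  rw [image_inter Subtype.val_injective, ← hcl.closure_image_eq, ← hcl.closure_image_eq,
    image_compl_eq_range_sdiff_image Subtype.val_injective, Subtype.range_coe, ← preimage_compl,
    Subtype.image_val_connectedComponentIn_preimage, ← sdiff_eq]

/-- Unicoherence of the cube: for disjoint nonempty connected `U, V ⊆ Γ = [0,1]^d`,
the exterior boundary `closure(U') ∩ closure(V')` of `U` relative to `V` is connected,
where `V'` is the connected component of `Γ \ U` containing `V` and `U' = Γ \ V'`. -/
theorem exterior_boundary_connected (d : ℕ) (U V : Set (Fin d → ℝ))
    (hUΓ : U ⊆ Set.Icc (0 : Fin d → ℝ) 1) (hVΓ : V ⊆ Set.Icc (0 : Fin d → ℝ) 1)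
    (hdisj : Disjoint U V) (hUc : IsConnected U) (hVc : IsConnected V)
    (x : Fin d → ℝ) (hx : x ∈ V) :
    IsConnected
      (closure (Set.Icc (0 : Fin d → ℝ) 1 \
          connectedComponentIn (Set.Icc (0 : Fin d → ℝ) 1 \ U) x) ∩
        closure (connectedComponentIn (Set.Icc (0 : Fin d → ℝ) 1 \ U) x)) :=
  exterior_boundary_connected_general d U V hUΓ hVΓ hdisj hUc x hx
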